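/- arXiv:1703.10380 — 6 statements merged into one kernel-verified Lean document; each statement's English description precedes it below -/
import Mathlib

section
/- Let G be a simple undirected graph with n ≥ 1 vertices and m edges, let k ≥ 1 be an integer, and let ⪯ be any total order on the vertices of G. Then the number of ⪯-capped k-walks in G is at least n · (m/(2n))^k. -/
/-!
Fix a threshold `d ≥ 0` and let `K v` be the `d`-core of the subgraph induced on `{x | x ≤ v}`:
the largest vertex set in which every vertex has at least `d` neighbours. A walk that starts at
`v`, steps into `K v` and stays there is capped, and there are at least
`deg_{K v}(v) * d ^ (k - 1)` of them. A set can be peeled down to its core removing fewer than `d`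
edges per vertex, so when the vertices are inserted in increasing order, `e(K) - d * |K|` for the
current core `K` grows by at most the degree of the new vertex into `K`; peeling the whole graph
gives `m - d * n ≤ e(K) - d * |K|` at the end. Hence `m ≤ ∑ v, deg_{K v}(v) + d * n`, and for
`d = m / 2n` the sum is at least `n * d`.
-/

/-- The set of `⪯`-capped `k`-walks in `G` (with respect to the order `le`):
walks `(x_0, …, x_k)` such that `x_i ⪯ x_0` for all `i = 1, …, k`. -/
def cappedWalks {V : Type*} (G : SimpleGraph V) (le : V → V → Prop) (k : ℕ) :
    Set (Fin (k + 1) → V) :=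
  {w | (∀ i : Fin k, G.Adj (w i.castSucc) (w i.succ)) ∧ ∀ i, le (w i) (w 0)}

open Finset

namespace SimpleGraph

variable {V : Type*} (G : SimpleGraph V) [DecidableRel G.Adj]

section DegreeWithin

def degreeIn (S : Finset V) (y : V) : ℕ := #{z ∈ S | G.Adj y z}

def degreeSumIn (S : Finset V) : ℕ := ∑ y ∈ S, G.degreeIn S y

variable {G}

lemma degreeIn_mono {S T : Finset V} (h : S ⊆ T) (y : V) : G.degreeIn S y ≤ G.degreeIn T y :=
  card_le_card (filter_subset_filter _ h)

variable [DecidableEq V]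

lemma degreeIn_insert {S : Finset V} {a : V} (ha : a ∉ S) (y : V) :
    G.degreeIn (insert a S) y = G.degreeIn S y + if G.Adj y a then 1 else 0 := by
  unfold degreeIn
  rw [filter_insert]
  split_ifs
  · exact card_insert_of_notMem (fun h' => ha (mem_filter.1 h').1)
  · rfl

lemma degreeSumIn_insert {S : Finset V} {a : V} (ha : a ∉ S) :
    G.degreeSumIn (insert a S) = G.degreeSumIn S + 2 * G.degreeIn S a := by
  have hback : ∑ y ∈ S, (if G.Adj y a then 1 else 0) = G.degreeIn S a := by
    rw [sum_boole, degreeIn]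
    simp only [adj_comm, Nat.cast_id]
  simp only [degreeSumIn, sum_insert ha, degreeIn_insert ha, G.irrefl, if_false, sum_add_distrib,
    hback]
  ring

end DegreeWithin

section Core

variable (d : ℝ)

def MinDegreeAtLeast (T : Finset V) : Prop := ∀ y ∈ T, d ≤ G.degreeIn T y

open Classical in
noncomputable def core (S : Finset V) : Finset V :=
  {y ∈ S | ∃ T ⊆ S, y ∈ T ∧ G.MinDegreeAtLeast d T}

variable {G d}

open Classical in
lemma mem_core {S : Finset V} {y : V} :
    y ∈ G.core d S ↔ y ∈ S ∧ ∃ T ⊆ S, y ∈ T ∧ G.MinDegreeAtLeast d T :=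
  mem_filter

lemma core_subset (S : Finset V) : G.core d S ⊆ S := fun _ h => (mem_core.1 h).1

lemma subset_core {S T : Finset V} (hTS : T ⊆ S) (hT : G.MinDegreeAtLeast d T) :
    T ⊆ G.core d S :=
  fun _ hy => mem_core.2 ⟨hTS hy, T, hTS, hy, hT⟩

lemma minDegreeAtLeast_core (S : Finset V) : G.MinDegreeAtLeast d (G.core d S) := by
  intro y hy
  obtain ⟨-, T, hTS, hyT, hT⟩ := mem_core.1 hy
  exact (hT y hyT).trans (by exact_mod_cast degreeIn_mono (subset_core hTS hT) y)

lemma core_mono {S S' : Finset V} (h : S ⊆ S') : G.core d S ⊆ G.core d S' :=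
  subset_core ((core_subset S).trans h) (minDegreeAtLeast_core S)

variable [DecidableEq V]

lemma degreeSumIn_le_degreeSumIn_core_add {S T : Finset V} (hKT : G.core d S ⊆ T)
    (hTS : T ⊆ S) :
    (G.degreeSumIn T : ℝ) ≤ G.degreeSumIn (G.core d S) + 2 * d * #(T \ G.core d S) := by
  induction T using Finset.strongInduction with
  | H T ih =>
  by_cases hT : G.MinDegreeAtLeast d T
  · simp [subset_antisymm (subset_core hTS hT) hKT]
  obtain ⟨y, hyT, hy⟩ : ∃ y ∈ T, G.degreeIn T y < d := by
    simpa [MinDegreeAtLeast] using hT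
  have hyK : y ∉ G.core d S := fun hyK =>
    (minDegreeAtLeast_core S y hyK).not_gt
      (lt_of_le_of_lt (by exact_mod_cast degreeIn_mono hKT y) hy)
  have hpeel := ih (T.erase y) (erase_ssubset hyT) (subset_erase.2 ⟨hKT, hyK⟩)
    ((erase_subset y T).trans hTS)
  have hsum : G.degreeSumIn T = G.degreeSumIn (T.erase y) + 2 * G.degreeIn (T.erase y) y := by
    rw [← degreeSumIn_insert (notMem_erase y T), insert_erase hyT]
  have hdeg : (G.degreeIn (T.erase y) y : ℝ) ≤ d :=
    (by exact_mod_cast degreeIn_mono (erase_subset y T) y : (_ : ℝ) ≤ _).trans hy.le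
  have hcard : #((T \ G.core d S).erase y) + 1 = #(T \ G.core d S) :=
    card_erase_add_one (mem_sdiff.2 ⟨hyT, hyK⟩)
  rw [← erase_sdiff_comm] at hcard
  rw [hsum, ← hcard]
  push_cast
  linarith

lemma degreeSumIn_core_insert_le (hd : 0 ≤ d) {s : Finset V} {a : V} (ha : a ∉ s) :
    (G.degreeSumIn (G.core d (insert a s)) : ℝ) - 2 * d * #(G.core d (insert a s)) ≤
      G.degreeSumIn (G.core d s) - 2 * d * #(G.core d s) +
        2 * G.degreeIn (G.core d (insert a s)) a := by
  have hKK' : G.core d s ⊆ G.core d (insert a s) := core_mono (subset_insert a s)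
  by_cases haK : a ∈ G.core d (insert a s)
  · set T := (G.core d (insert a s)).erase a
    have hTs : T ⊆ s := fun x hx => by
      obtain ⟨hxa, hx⟩ := mem_erase.1 hx
      exact (mem_insert.1 (core_subset _ hx)).resolve_left hxa
    have hKT : G.core d s ⊆ T := subset_erase.2 ⟨hKK', fun h => ha (core_subset s h)⟩
    have hpeel := degreeSumIn_le_degreeSumIn_core_add hKT hTs
    have hsum : G.degreeSumIn (G.core d (insert a s)) = G.degreeSumIn T + 2 * G.degreeIn T a := by
      rw [← degreeSumIn_insert (notMem_erase a _), insert_erase haK]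
    have hdeg : (G.degreeIn T a : ℝ) ≤ G.degreeIn (G.core d (insert a s)) a := by
      exact_mod_cast degreeIn_mono (erase_subset a _) a
    have hcardT : #(T \ G.core d s) + #(G.core d s) = #T := card_sdiff_add_card_eq_card hKT
    have hcardK' : #T + 1 = #(G.core d (insert a s)) := card_erase_add_one haK
    have hcard : (#(T \ G.core d s) : ℝ) + #(G.core d s) + 1 = #(G.core d (insert a s)) := by
      exact_mod_cast hcardT ▸ hcardK'
    rw [hsum, ← hcard]
    push_cast
    linarith
  · have hK'K : G.core d (insert a s) ⊆ G.core d s := by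
      refine subset_core (fun x hx => ?_) (minDegreeAtLeast_core _)
      exact (mem_insert.1 (core_subset _ hx)).resolve_left (fun h => haK (h ▸ hx))
    rw [subset_antisymm hK'K hKK']
    linarith [(G.degreeIn (G.core d s) a).cast_nonneg (α := ℝ)]

lemma degreeSumIn_core_le [LinearOrder V] (hd : 0 ≤ d) (D : Finset V) :
    (G.degreeSumIn (G.core d D) : ℝ) - 2 * d * #(G.core d D) ≤
      2 * ∑ v ∈ D, (G.degreeIn (G.core d {x ∈ D | x ≤ v}) v : ℝ) := by
  induction D using Finset.induction_on_max with
  | empty => simp [subset_empty.1 (core_subset (G := G) (d := d) ∅), degreeSumIn]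
  | insert a s hlt ih =>
  have ha : a ∉ s := fun h => lt_irrefl a (hlt a h)
  have hbelow : ∀ v ∈ s, {x ∈ insert a s | x ≤ v} = {x ∈ s | x ≤ v} := fun v hv => by
    rw [filter_insert, if_neg (hlt v hv).not_ge]
  have htop : {x ∈ insert a s | x ≤ a} = insert a s :=
    filter_true_of_mem fun x hx => (mem_insert.1 hx).elim le_of_eq fun h => (hlt x h).le
  rw [sum_insert ha, htop, sum_congr rfl fun v hv => by rw [hbelow v hv]]
  linarith [degreeSumIn_core_insert_le (G := G) hd ha]

lemma card_edgeFinset_le_sum_degreeIn_core [Fintype V] [LinearOrder V] (hd : 0 ≤ d) :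
    (#G.edgeFinset : ℝ) ≤
      ∑ v, (G.degreeIn (G.core d {x | x ≤ v}) v : ℝ) + d * Fintype.card V := by
  have hdarts : G.degreeSumIn univ = 2 * #G.edgeFinset := by
    rw [← G.sum_degrees_eq_twice_card_edges]
    simp [degreeSumIn, degreeIn, ← card_neighborFinset_eq_degree, neighborFinset_eq_filter]
  have hpeel :=
    degreeSumIn_le_degreeSumIn_core_add (G := G) (d := d) (subset_univ _) (subset_refl univ)
  have hcore := degreeSumIn_core_le (G := G) hd univ
  have hcard : (#(univ \ G.core d univ) : ℝ) + #(G.core d univ) = Fintype.card V := by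
    exact_mod_cast card_sdiff_add_card_eq_card (subset_univ _)
  rw [hdarts] at hpeel
  push_cast at hpeel
  rw [← hcard]
  linarith

end Core

section Walks

variable [Fintype V] [DecidableEq V]

def walksInFrom (S : Finset V) (u : V) (j : ℕ) : Finset (Fin (j + 1) → V) :=
  {w | w 0 = u ∧ ∀ i : Fin j, G.Adj (w i.castSucc) (w i.succ) ∧ w i.succ ∈ S}

variable {G}

@[simp]
lemma mem_walksInFrom {S : Finset V} {u : V} {j : ℕ} {w : Fin (j + 1) → V} :
    w ∈ G.walksInFrom S u j ↔
      w 0 = u ∧ ∀ i : Fin j, G.Adj (w i.castSucc) (w i.succ) ∧ w i.succ ∈ S := by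
  simp [walksInFrom]

lemma card_walksInFrom_zero (S : Finset V) (u : V) : #(G.walksInFrom S u 0) = 1 := by
  rw [card_eq_one]
  refine ⟨fun _ => u, eq_singleton_iff_unique_mem.2 ⟨by simp, fun w hw => ?_⟩⟩
  funext i
  rw [Fin.fin_one_eq_zero i]
  exact (mem_walksInFrom.1 hw).1

lemma card_walksInFrom_succ (S : Finset V) (u : V) (j : ℕ) :
    #(G.walksInFrom S u (j + 1)) = ∑ u' ∈ {z ∈ S | G.Adj u z}, #(G.walksInFrom S u' j) := by
  rw [card_eq_sum_card_fiberwise (f := fun w => w 1) fun w hw => ?_]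
  · refine sum_congr rfl fun u' hu' => card_nbij' Fin.tail (fun w => Fin.cons u w) ?_ ?_ ?_ ?_
    · intro w hw
      obtain ⟨hwalk, rfl⟩ := mem_filter.1 hw
      exact mem_walksInFrom.2 ⟨rfl, fun i => (mem_walksInFrom.1 hwalk).2 i.succ⟩
    · intro w hw
      obtain ⟨rfl, hstep⟩ := mem_walksInFrom.1 hw
      obtain ⟨hS, hadj⟩ := mem_filter.1 hu'
      exact mem_filter.2
        ⟨mem_walksInFrom.2 ⟨rfl, Fin.forall_fin_succ.2 ⟨⟨hadj, hS⟩, hstep⟩⟩, rfl⟩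
    · intro w hw
      rw [← (mem_walksInFrom.1 (mem_filter.1 hw).1).1]
      exact Fin.cons_self_tail w
    · exact fun w _ => Fin.tail_cons (α := fun _ => V) u w
  · obtain ⟨rfl, hstep⟩ := mem_walksInFrom.1 hw
    exact mem_filter.2 ⟨(hstep 0).2, (hstep 0).1⟩

lemma degreeIn_mul_pow_le_card_walksInFrom {d : ℝ} (hd : 0 ≤ d) {S : Finset V}
    (hS : G.MinDegreeAtLeast d S) (u : V) (j : ℕ) :
    (G.degreeIn S u : ℝ) * d ^ j ≤ #(G.walksInFrom S u (j + 1)) := by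
  induction j generalizing u with
  | zero => simp [card_walksInFrom_succ, card_walksInFrom_zero, degreeIn]
  | succ j ih =>
    rw [card_walksInFrom_succ, degreeIn, pow_succ', ← mul_assoc, Nat.cast_sum, card_eq_sum_ones,
      Nat.cast_sum, sum_mul, sum_mul]
    refine sum_le_sum fun u' hu' => le_trans ?_ (ih u')
    gcongr
    simpa using hS u' (mem_filter.1 hu').1

lemma sum_card_walksInFrom_le_card_cappedWalks [LinearOrder V] (S : V → Finset V)
    (hS : ∀ v, ∀ x ∈ S v, x ≤ v) (k : ℕ) :
    ∑ v, #(G.walksInFrom (S v) v k) ≤ Nat.card (cappedWalks G (· ≤ ·) k) := by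
  rw [← card_biUnion fun v _ v' _ hvv' => Finset.disjoint_left.2 fun w hw hw' =>
    hvv' ((mem_walksInFrom.1 hw).1.symm.trans (mem_walksInFrom.1 hw').1)]
  rw [← Nat.card_eq_finsetCard]
  refine Nat.card_mono (Set.toFinite _) fun w hw => ?_
  obtain ⟨v, -, hw⟩ := mem_biUnion.1 hw
  obtain ⟨rfl, hstep⟩ := mem_walksInFrom.1 hw
  exact ⟨fun i => (hstep i).1, Fin.cases le_rfl fun i => hS _ _ (hstep i).2⟩

end Walks

end SimpleGraph

theorem capped_kwalks_lower_bound_general {V : Type*} [Fintype V] [DecidableEq V]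
    (G : SimpleGraph V) [DecidableRel G.Adj] (L : LinearOrder V)
    (k : ℕ) (hk : 1 ≤ k) :
    (Fintype.card V : ℝ) *
        ((G.edgeFinset.card : ℝ) / (2 * Fintype.card V)) ^ k ≤
      (Nat.card (cappedWalks G L.le k) : ℝ) := by
  obtain ⟨j, rfl⟩ := Nat.exists_eq_add_of_le' hk
  set d : ℝ := #G.edgeFinset / (2 * Fintype.card V) with hd_def
  have hd : 0 ≤ d := by positivity
  have hnd : 2 * (Fintype.card V * d) ≤ #G.edgeFinset := by
    rcases eq_or_ne (Fintype.card V : ℝ) 0 with h | h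
    · simp [h]
    · exact le_of_eq (by rw [hd_def]; field_simp)
  have hedges := SimpleGraph.card_edgeFinset_le_sum_degreeIn_core (G := G) hd
  calc (Fintype.card V : ℝ) * d ^ (j + 1)
      = Fintype.card V * d * d ^ j := by ring
    _ ≤ (∑ v, (G.degreeIn (G.core d {x | x ≤ v}) v : ℝ)) * d ^ j := by gcongr; linarith
    _ = ∑ v, (G.degreeIn (G.core d {x | x ≤ v}) v : ℝ) * d ^ j := sum_mul _ _ _
    _ ≤ ∑ v, (#(G.walksInFrom (G.core d {x | x ≤ v}) v (j + 1)) : ℝ) := by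
      gcongr with v
      exact SimpleGraph.degreeIn_mul_pow_le_card_walksInFrom hd
        (SimpleGraph.minDegreeAtLeast_core _) v j
    _ ≤ Nat.card (cappedWalks G L.le (j + 1)) := by
      exact_mod_cast SimpleGraph.sum_card_walksInFrom_le_card_cappedWalks _
        (fun v x hx => (mem_filter.1 (SimpleGraph.core_subset _ hx)).2) _

theorem capped_kwalks_lower_bound {V : Type*} [Fintype V] [DecidableEq V]
    (G : SimpleGraph V) [DecidableRel G.Adj] (L : LinearOrder V)
    (k : ℕ) (hk : 1 ≤ k) (hn : 1 ≤ Fintype.card V) :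
    (Fintype.card V : ℝ) *
        ((G.edgeFinset.card : ℝ) / (2 * Fintype.card V)) ^ k ≤
      (Nat.card (cappedWalks G L.le k) : ℝ) :=
  capped_kwalks_lower_bound_general G L k hk
end

section
/- The function ‖·‖_◦ on ℝ^n satisfies the axioms of a norm: for all vectors u, v ∈ ℝ^n and all scalars c ∈ ℝ, (i) ‖u + v‖_◦ ≤ ‖u‖_◦ + ‖v‖_◦, (ii) ‖c·u‖_◦ = |c|·‖u‖_◦, and (iii) ‖u‖_◦ = 0 if and only if u = 0. -/
/-!
With the weights `a k = √(k+1) - √k`, which telescope to `√m = ∑_{k<m} a k`, the integrand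
`√#{i : x ≤ |v i|}` is a sum of indicators, and integrating gives `‖v‖_◦ = ∑ k, a k * v*_k`,
where `v*` is the decreasing rearrangement of `|v|`. The weights decrease, so by the
rearrangement inequality `‖v‖_◦` is the maximum over all permutations `σ` of the seminorms
`∑ k, a k * |v (σ k)|`; a maximum of seminorms satisfies the triangle inequality, and
`a 0 = 1` gives `|v i| ≤ ‖v‖_◦`, hence definiteness.
-/

open MeasureTheory

/-- The `‖·‖_◦` norm: `‖v‖_◦ = ∫₀^∞ √(#{i : |v_i| ≥ x}) dx`. -/
noncomputable def circNorm {n : ℕ} (v : Fin n → ℝ) : ℝ :=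
  ∫ x in Set.Ioi (0 : ℝ),
    Real.sqrt ((Finset.univ.filter (fun i : Fin n => x ≤ |v i|)).card : ℝ)

open Finset

noncomputable def circWeight (k : ℕ) : ℝ := √(k + 1) - √k

@[simp] lemma circWeight_zero : circWeight 0 = 1 := by simp [circWeight]

lemma circWeight_nonneg (k : ℕ) : 0 ≤ circWeight k :=
  sub_nonneg.2 (Real.sqrt_le_sqrt (by linarith))

lemma circWeight_eq_inv (k : ℕ) : circWeight k = (√(k + 1) + √k)⁻¹ := by
  refine eq_inv_of_mul_eq_one_left ?_
  rw [circWeight, mul_comm, ← sq_sub_sq, Real.sq_sqrt (by positivity), Real.sq_sqrt (by positivity)]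
  ring

lemma circWeight_antitone : Antitone circWeight := by
  intro j k hjk
  rw [circWeight_eq_inv, circWeight_eq_inv]
  have hjk : (j : ℝ) ≤ k := by exact_mod_cast hjk
  gcongr

lemma sum_range_circWeight (m : ℕ) : ∑ k ∈ range m, circWeight k = √m := by
  simpa [circWeight] using Finset.sum_range_sub (fun k : ℕ => √(k : ℝ)) m

lemma lt_card_filter_le_iff {n : ℕ} {w : Fin n → ℝ} (hw : Antitone w) (x : ℝ) (k : Fin n) :
    (k : ℕ) < #{i | x ≤ w i} ↔ x ≤ w k := by
  constructor
  · intro hk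
    by_contra hx
    have : #{i | x ≤ w i} ≤ #(Iio k) :=
      card_le_card fun i hi => mem_Iio.2 <| lt_of_not_ge fun hki =>
        hx ((mem_filter.1 hi).2.trans (hw hki))
    rw [Fin.card_Iio] at this
    omega
  · intro hx
    have : #(Iic k) ≤ #{i | x ≤ w i} :=
      card_le_card fun i hi => mem_filter.2 ⟨mem_univ _, hx.trans (hw (mem_Iic.1 hi))⟩
    rw [Fin.card_Iic] at this
    omega

lemma sqrt_card_filter_le_eq_sum_indicator {n : ℕ} {w : Fin n → ℝ} (hw : Antitone w) (x : ℝ) :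
    √(#{i | x ≤ w i} : ℝ) = ∑ k : Fin n, (Set.Iic (w k)).indicator (fun _ => circWeight k) x := by
  set m := #{i | x ≤ w i}
  have hm : m ≤ n := (card_filter_le _ _).trans (card_fin n).le
  calc √(m : ℝ) = ∑ k ∈ range n, if k < m then circWeight k else 0 := by
        rw [← sum_filter, ← sum_range_circWeight]
        congr 1
        ext k
        simp only [mem_filter, Finset.mem_range]
        omega
    _ = _ := by
        rw [← Fin.sum_univ_eq_sum_range (fun k => if k < m then circWeight k else 0)]
        refine sum_congr rfl fun k _ => ?_
        simp only [Set.indicator_apply, Set.mem_Iic]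
        exact if_congr (lt_card_filter_le_iff hw x k) rfl rfl

lemma integral_Ioi_indicator_Iic {a b : ℝ} (hb : 0 ≤ b) :
    ∫ x in Set.Ioi 0, (Set.Iic b).indicator (fun _ => a) x = a * b := by
  rw [setIntegral_indicator measurableSet_Iic, Set.Ioi_inter_Iic, setIntegral_const,
    Real.volume_real_Ioc_of_le hb, smul_eq_mul, sub_zero, mul_comm]

lemma integrableOn_Ioi_indicator_Iic (a b : ℝ) :
    IntegrableOn ((Set.Iic b).indicator fun _ => a) (Set.Ioi 0) := by
  rw [IntegrableOn, integrable_indicator_iff measurableSet_Iic, IntegrableOn,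
    Measure.restrict_restrict measurableSet_Iic, Set.Iic_inter_Ioi]
  exact integrableOn_const measure_Ioc_lt_top.ne

lemma circNorm_eq_sum_of_antitone {n : ℕ} {v : Fin n → ℝ} (hv : Antitone fun i => |v i|) :
    circNorm v = ∑ k : Fin n, circWeight k * |v k| := by
  rw [circNorm, funext (sqrt_card_filter_le_eq_sum_indicator hv),
    integral_finsetSum _ fun k _ => integrableOn_Ioi_indicator_Iic _ _]
  exact sum_congr rfl fun k _ => integral_Ioi_indicator_Iic (abs_nonneg _)

lemma circNorm_comp_perm {n : ℕ} (v : Fin n → ℝ) (σ : Equiv.Perm (Fin n)) :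
    circNorm (v ∘ σ) = circNorm v := by
  unfold circNorm
  congr! 4 with x
  exact card_equiv σ (by simp)

lemma circNorm_eq_sum_of_antitone_comp {n : ℕ} {v : Fin n → ℝ} {σ : Equiv.Perm (Fin n)}
    (hσ : Antitone fun i => |v (σ i)|) :
    circNorm v = ∑ k : Fin n, circWeight k * |v (σ k)| := by
  rw [← circNorm_comp_perm v σ]
  exact circNorm_eq_sum_of_antitone hσ

lemma exists_perm_antitone_abs_comp {n : ℕ} (v : Fin n → ℝ) :
    ∃ σ : Equiv.Perm (Fin n), Antitone fun i => |v (σ i)| :=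
  ⟨Fin.revPerm.trans (Tuple.sort fun i => |v i|), fun _ _ hij =>
    Tuple.monotone_sort (fun i => |v i|) (Fin.rev_le_rev.2 hij)⟩

lemma sum_circWeight_mul_abs_comp_le_circNorm {n : ℕ} (v : Fin n → ℝ) (σ : Equiv.Perm (Fin n)) :
    ∑ k : Fin n, circWeight k * |v (σ k)| ≤ circNorm v := by
  obtain ⟨τ, hτ⟩ := exists_perm_antitone_abs_comp v
  have hweight : Antitone fun k : Fin n => circWeight k :=
    circWeight_antitone.comp_monotone Fin.val_strictMono.monotone
  rw [circNorm_eq_sum_of_antitone_comp hτ]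
  simpa using (hweight.monovary hτ).sum_mul_comp_perm_le_sum_mul (σ := τ⁻¹ * σ)

lemma abs_le_circNorm {n : ℕ} (v : Fin n → ℝ) (i : Fin n) : |v i| ≤ circNorm v := by
  let i₀ : Fin n := ⟨0, i.pos⟩
  calc |v i| = circWeight i₀ * |v (Equiv.swap i₀ i i₀)| := by simp [i₀]
    _ ≤ ∑ k : Fin n, circWeight k * |v (Equiv.swap i₀ i k)| :=
        single_le_sum (f := fun k : Fin n => circWeight k * |v (Equiv.swap i₀ i k)|)
          (fun k _ => mul_nonneg (circWeight_nonneg k) (abs_nonneg _)) (mem_univ i₀)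
    _ ≤ circNorm v := sum_circWeight_mul_abs_comp_le_circNorm v _

lemma circNorm_add_le {n : ℕ} (u v : Fin n → ℝ) : circNorm (u + v) ≤ circNorm u + circNorm v := by
  obtain ⟨σ, hσ⟩ := exists_perm_antitone_abs_comp (u + v)
  calc circNorm (u + v) = ∑ k : Fin n, circWeight k * |u (σ k) + v (σ k)| :=
        circNorm_eq_sum_of_antitone_comp hσ
    _ ≤ ∑ k : Fin n, (circWeight k * |u (σ k)| + circWeight k * |v (σ k)|) := by
        gcongr with k
        rw [← mul_add]
        exact mul_le_mul_of_nonneg_left (abs_add_le _ _) (circWeight_nonneg k)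
    _ ≤ circNorm u + circNorm v := by
        rw [sum_add_distrib]
        exact add_le_add (sum_circWeight_mul_abs_comp_le_circNorm u σ)
          (sum_circWeight_mul_abs_comp_le_circNorm v σ)

lemma circNorm_smul {n : ℕ} (c : ℝ) (u : Fin n → ℝ) : circNorm (c • u) = |c| * circNorm u := by
  obtain ⟨σ, hσ⟩ := exists_perm_antitone_abs_comp u
  have hcσ : Antitone fun i => |(c • u) (σ i)| := by
    simpa only [Pi.smul_apply, smul_eq_mul, abs_mul] using hσ.const_mul (abs_nonneg c)
  rw [circNorm_eq_sum_of_antitone_comp hcσ, circNorm_eq_sum_of_antitone_comp hσ, mul_sum]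
  simp only [Pi.smul_apply, smul_eq_mul, abs_mul, mul_left_comm]

lemma circNorm_zero {n : ℕ} : circNorm (0 : Fin n → ℝ) = 0 := by
  simpa using circNorm_eq_sum_of_antitone (v := (0 : Fin n → ℝ)) (by simpa using antitone_const)

lemma circNorm_eq_zero_iff {n : ℕ} (u : Fin n → ℝ) : circNorm u = 0 ↔ u = 0 :=
  ⟨fun h => funext fun i => abs_nonpos_iff.1 (h ▸ abs_le_circNorm u i),
    fun h => h ▸ circNorm_zero⟩

theorem circNorm_is_norm {n : ℕ} (u v : Fin n → ℝ) (c : ℝ) :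
    circNorm (u + v) ≤ circNorm u + circNorm v ∧
    circNorm (c • u) = |c| * circNorm u ∧
    (circNorm u = 0 ↔ u = 0) :=
  ⟨circNorm_add_le u v, circNorm_smul c u, circNorm_eq_zero_iff u⟩
end

section
/- Let G be a simple undirected graph on n vertices with adjacency matrix X_G, let S be a subset of the vertices of G, and let k ≥ 1 be an integer. Then the number of k-walks (x_0,…,x_k) in G with x_0 ∈ S is at most √|S| · ‖X_G^k · 𝟙‖_◦, where 𝟙 ∈ ℝ^n is the all-ones vector. -/
open MeasureTheory

/-! The `k`-walks starting at `x` are counted by `v_x = (X_G^k 𝟙)_x`, so the left-hand side is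
`∑_{x ∈ S} v_x`. By the layer-cake formula this is `∫₀^∞ #{x ∈ S | t ≤ v_x} dt`, and the integrand
is at most `min (#S) #{i | t ≤ |v_i|} ≤ √#S · √#{i | t ≤ |v_i|}`. -/

open Finset Set

section LayerCake

variable {ι : Type*} (s : Finset ι) (f : ι → ℝ)

lemma integrableOn_Ioi_indicator_Iic_s4 (a : ℝ) :
    IntegrableOn ((Iic a).indicator (1 : ℝ → ℝ)) (Ioi 0) := by
  rw [IntegrableOn, integrable_indicator_iff measurableSet_Iic, IntegrableOn,
    Measure.restrict_restrict measurableSet_Iic, Set.inter_comm, Ioi_inter_Iic]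
  exact integrableOn_const measure_Ioc_lt_top.ne

lemma setIntegral_Ioi_indicator_Iic {a : ℝ} (ha : 0 ≤ a) :
    ∫ t in Ioi 0, (Iic a).indicator (1 : ℝ → ℝ) t = a := by
  rw [integral_indicator measurableSet_Iic, Measure.restrict_restrict measurableSet_Iic,
    Set.inter_comm, Ioi_inter_Iic, Pi.one_def, setIntegral_const, Real.volume_real_Ioc_of_le ha,
    smul_eq_mul, mul_one, sub_zero]

lemma card_filter_le_eq_sum_indicator (t : ℝ) :
    (#{x ∈ s | t ≤ f x} : ℝ) = ∑ x ∈ s, (Iic (f x)).indicator 1 t := by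
  rw [card_filter, Nat.cast_sum]
  exact sum_congr rfl fun x _ => by by_cases h : t ≤ f x <;> simp [h]

lemma integrableOn_card_filter_le :
    IntegrableOn (fun t => (#{x ∈ s | t ≤ f x} : ℝ)) (Ioi 0) := by
  simp_rw [card_filter_le_eq_sum_indicator]
  exact integrable_finsetSum s fun x _ => integrableOn_Ioi_indicator_Iic_s4 (f x)

/-- The layer-cake formula for a finite sum. -/
lemma setIntegral_card_filter_le (hf : ∀ x ∈ s, 0 ≤ f x) :
    ∫ t in Ioi 0, (#{x ∈ s | t ≤ f x} : ℝ) = ∑ x ∈ s, f x := by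
  simp_rw [card_filter_le_eq_sum_indicator]
  rw [integral_finsetSum s fun x _ => integrableOn_Ioi_indicator_Iic_s4 (f x)]
  exact sum_congr rfl fun x hx => setIntegral_Ioi_indicator_Iic (hf x hx)

lemma integrableOn_sqrt_card_filter_le :
    IntegrableOn (fun t => √(#{x ∈ s | t ≤ f x} : ℝ)) (Ioi 0) := by
  refine (integrableOn_card_filter_le s f).mono' ?_ (ae_of_all _ fun t => ?_)
  · have hmeas : Measurable fun t => (#{x ∈ s | t ≤ f x} : ℝ) := by
      simp_rw [card_filter_le_eq_sum_indicator]
      exact Finset.measurable_sum _ fun x _ => measurable_const.indicator measurableSet_Iic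
    exact hmeas.sqrt.aestronglyMeasurable
  · rw [Real.norm_of_nonneg (Real.sqrt_nonneg _), Real.sqrt_le_self_iff]
    rcases Nat.eq_zero_or_pos #{x ∈ s | t ≤ f x} with h | h
    · exact Or.inl (by simp [h])
    · exact Or.inr (by exact_mod_cast h)

end LayerCake

lemma card_le_sqrt_card_mul_sqrt_card_of_subset {α : Type*} {A B C : Finset α}
    (hB : A ⊆ B) (hC : A ⊆ C) : (#A : ℝ) ≤ √(#B : ℝ) * √(#C : ℝ) := by
  rw [← Real.sqrt_mul (Nat.cast_nonneg _), ← Real.sqrt_mul_self (Nat.cast_nonneg (#A))]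
  gcongr

theorem sum_abs_le_sqrt_card_mul_circNorm {n : ℕ} (S : Finset (Fin n)) (v : Fin n → ℝ) :
    ∑ x ∈ S, |v x| ≤ √(#S : ℝ) * circNorm v := by
  calc ∑ x ∈ S, |v x| = ∫ t in Ioi 0, (#{x ∈ S | t ≤ |v x|} : ℝ) :=
        (setIntegral_card_filter_le S _ fun x _ => abs_nonneg (v x)).symm
    _ ≤ ∫ t in Ioi 0, √(#S : ℝ) * √(#{i | t ≤ |v i|} : ℝ) :=
        integral_mono (integrableOn_card_filter_le S _)
          ((integrableOn_sqrt_card_filter_le univ _).const_mul _) fun t =>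
          card_le_sqrt_card_mul_sqrt_card_of_subset (filter_subset _ S)
            (filter_subset_filter _ (subset_univ S))
    _ = √(#S : ℝ) * circNorm v := integral_const_mul _ _

namespace SimpleGraph

variable {V : Type*} (G : SimpleGraph V)

def walksFrom (k : ℕ) (x : V) : Set (Fin (k + 1) → V) :=
  {w | (∀ i : Fin k, G.Adj (w i.castSucc) (w i.succ)) ∧ w 0 = x}

def walksFromSuccEquiv (k : ℕ) (x : V) :
    G.walksFrom (k + 1) x ≃ Σ y : G.neighborSet x, G.walksFrom k y where
  toFun w := ⟨⟨w.1 1, by simpa [w.2.2] using w.2.1 0⟩,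
    ⟨Fin.tail w.1, fun i => by simpa [Fin.tail] using w.2.1 i.succ, rfl⟩⟩
  invFun p := ⟨Fin.cons x p.2.1, Fin.forall_fin_succ.2
    ⟨by simpa only [Fin.cons_zero, Fin.cons_succ, Fin.castSucc_zero, p.2.2.2, mem_neighborSet]
        using p.1.2,
      fun i => by simpa using p.2.2.1 i⟩, rfl⟩
  left_inv w := Subtype.ext <| by
    conv_rhs => rw [← Fin.cons_self_tail w.1, w.2.2]
  right_inv p :=
    Sigma.subtype_ext (Subtype.ext (by simpa using p.2.2.2))
      (Fin.tail_cons (α := fun _ => V) x p.2.1)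

theorem natCard_walksFrom_eq_adjMatrix_pow_mulVec [Fintype V] [DecidableEq V]
    [DecidableRel G.Adj] {R : Type*} [Semiring R] (k : ℕ) (x : V) :
    (Nat.card (G.walksFrom k x) : R) = (G.adjMatrix R ^ k).mulVec (fun _ => 1) x := by
  induction k generalizing x with
  | zero =>
    have : G.walksFrom 0 x = {fun _ => x} := by
      ext w
      simp [walksFrom, funext_iff, Fin.forall_fin_one]
    simp [this]
  | succ k ih =>
    rw [Nat.card_congr (G.walksFromSuccEquiv k x), Nat.card_sigma, pow_succ',
      ← Matrix.mulVec_mulVec, adjMatrix_mulVec_apply, Nat.cast_sum,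
      neighborFinset, ← sum_set_coe]
    simp only [ih]

def walksFromFinsetEquiv (k : ℕ) (S : Finset V) :
    {w : Fin (k + 1) → V | (∀ i : Fin k, G.Adj (w i.castSucc) (w i.succ)) ∧ w 0 ∈ S} ≃
      Σ x : S, G.walksFrom k x where
  toFun w := ⟨⟨w.1 0, w.2.2⟩, w.1, w.2.1, rfl⟩
  invFun p := ⟨p.2.1, p.2.2.1, by rw [p.2.2.2]; exact p.1.2⟩
  left_inv _ := rfl
  right_inv p := Sigma.subtype_ext (Subtype.ext p.2.2.2) rfl

theorem natCard_walks_start_mem_eq_sum [Finite V] (k : ℕ) (S : Finset V) :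
    Nat.card {w : Fin (k + 1) → V | (∀ i : Fin k, G.Adj (w i.castSucc) (w i.succ)) ∧ w 0 ∈ S} =
      ∑ x ∈ S, Nat.card (G.walksFrom k x) := by
  rw [Nat.card_congr (G.walksFromFinsetEquiv k S), Nat.card_sigma]
  exact sum_coe_sort S fun x => Nat.card (G.walksFrom k x)

end SimpleGraph

theorem kwalks_from_set_bound_general {n : ℕ} (G : SimpleGraph (Fin n))
    [DecidableRel G.Adj] (S : Finset (Fin n)) (k : ℕ) :
    (Nat.card {w : Fin (k + 1) → Fin n |
        (∀ i : Fin k, G.Adj (w i.castSucc) (w i.succ)) ∧ w 0 ∈ S} : ℝ) ≤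
      Real.sqrt S.card * circNorm ((G.adjMatrix ℝ ^ k).mulVec (fun _ => 1)) := by
  set v := (G.adjMatrix ℝ ^ k).mulVec (fun _ => 1)
  rw [G.natCard_walks_start_mem_eq_sum, Nat.cast_sum]
  calc ∑ x ∈ S, (Nat.card (G.walksFrom k x) : ℝ) = ∑ x ∈ S, v x := by
        simp only [G.natCard_walksFrom_eq_adjMatrix_pow_mulVec, v]
    _ ≤ ∑ x ∈ S, |v x| := sum_le_sum fun x _ => le_abs_self (v x)
    _ ≤ √(#S : ℝ) * circNorm v := sum_abs_le_sqrt_card_mul_circNorm S v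

theorem kwalks_from_set_bound {n : ℕ} (G : SimpleGraph (Fin n))
    [DecidableRel G.Adj] (S : Finset (Fin n)) (k : ℕ) (hk : 1 ≤ k) :
    (Nat.card {w : Fin (k + 1) → Fin n |
        (∀ i : Fin k, G.Adj (w i.castSucc) (w i.succ)) ∧ w 0 ∈ S} : ℝ) ≤
      Real.sqrt S.card * circNorm ((G.adjMatrix ℝ ^ k).mulVec (fun _ => 1)) :=
  kwalks_from_set_bound_general G S k
end

section
/- Let v ∈ ℝ^n be a vector with all entries nonnegative. For each integer k ∈ ℤ define the vector v^{(k)} ∈ ℝ^n coordinatewise by v^{(k)}_i = v_i if v_i ∈ (2^{k−1}, 2^k] and v^{(k)}_i = 0 otherwise. Then Σ_{k ∈ ℤ} ‖v^{(k)}‖_◦ ≤ 4·‖v‖_◦. -/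
open MeasureTheory

/-!
Let `N_k` be the number of entries of `v` in `(2^(k-1), 2^k]`. The piece `v^(k)` has at most
`N_k` nonzero entries, all of absolute value at most `2^k`, so `‖v^(k)‖_◦ ≤ 2^k √N_k`. On the
other hand at least `N_k` entries of `v` are `≥ x` for every `x ≤ 2^(k-1)`, so the integral
defining `‖v‖_◦`, restricted to `(2^(k-2), 2^(k-1)]`, is at least `2^(k-2) √N_k`. These
intervals are disjoint, so summing over `k` costs a factor `4`.
-/

open Set Finset

noncomputable section

namespace CircNorm

variable {n : ℕ}

def density (v : Fin n → ℝ) (x : ℝ) : ℝ :=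
  √(#{i | x ≤ |v i|} : ℝ)

/-- The dyadic piece `v^(k)` of `v`. -/
def dyadicPiece (v : Fin n → ℝ) (k : ℤ) : Fin n → ℝ :=
  fun i => if (2 : ℝ) ^ (k - 1) < v i ∧ v i ≤ (2 : ℝ) ^ k then v i else 0

lemma density_nonneg (v : Fin n → ℝ) (x : ℝ) : 0 ≤ density v x :=
  Real.sqrt_nonneg _

lemma antitone_density (v : Fin n → ℝ) : Antitone (density v) := fun _ _ hxy => by
  unfold density
  gcongr

lemma density_eq_zero_of_forall_abs_lt {v : Fin n → ℝ} {x : ℝ} (hx : ∀ i, |v i| < x) :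
    density v x = 0 := by
  simp [density, filter_eq_empty_iff, hx]

lemma integrableOn_density (v : Fin n → ℝ) {a b : ℝ} : IntegrableOn (density v) (Icc a b) :=
  (antitone_density v).locallyIntegrable.integrableOn_isCompact isCompact_Icc

lemma integrableOn_Ioi_density (v : Fin n → ℝ) : IntegrableOn (density v) (Ioi 0) := by
  obtain ⟨M, hM⟩ := (Set.finite_range fun i => |v i|).bddAbove
  refine (integrableOn_density v (a := 0) (b := M)).of_forall_sdiff_eq_zero measurableSet_Ioi
    fun x hx => density_eq_zero_of_forall_abs_lt fun i => ?_
  exact (hM (mem_range_self i)).trans_lt (not_le.1 fun h => hx.2 ⟨hx.1.le, h⟩)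

lemma circNorm_nonneg (v : Fin n → ℝ) : 0 ≤ circNorm v :=
  setIntegral_nonneg measurableSet_Ioi fun x _ => density_nonneg v x

lemma circNorm_le_mul_sqrt_card_support {w : Fin n → ℝ} {M : ℝ} (hM : 0 ≤ M)
    (hw : ∀ i, |w i| ≤ M) : circNorm w ≤ M * √(#{i | w i ≠ 0} : ℝ) := by
  have h_support : ∀ x ∈ Ioc 0 M, density w x ≤ √(#{i | w i ≠ 0} : ℝ) := fun x hx => by
    unfold density
    gcongr with i _
    intro hx_le h_zero
    exact hx.1.not_ge (by simpa [h_zero] using hx_le)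
  calc circNorm w = ∫ x in Ioc 0 M, density w x :=
        setIntegral_eq_of_subset_of_forall_sdiff_eq_zero measurableSet_Ioi Ioc_subset_Ioi_self
          fun x hx => density_eq_zero_of_forall_abs_lt fun i =>
            (hw i).trans_lt (not_le.1 fun h => hx.2 ⟨hx.1, h⟩)
    _ ≤ ∫ _ in Ioc 0 M, √(#{i | w i ≠ 0} : ℝ) :=
        setIntegral_mono_on ((integrableOn_density w).mono_set Ioc_subset_Icc_self)
          (integrableOn_const measure_Ioc_lt_top.ne) measurableSet_Ioc h_support
    _ = M * √(#{i | w i ≠ 0} : ℝ) := by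
        rw [setIntegral_const, Real.volume_real_Ioc_of_le hM, sub_zero, smul_eq_mul]

lemma mul_sqrt_card_le_setIntegral_density (v : Fin n → ℝ) {a b : ℝ} (hab : a ≤ b) :
    (b - a) * √(#{i | b ≤ |v i|} : ℝ) ≤ ∫ x in Ioc a b, density v x := by
  calc (b - a) * √(#{i | b ≤ |v i|} : ℝ) = ∫ _ in Ioc a b, √(#{i | b ≤ |v i|} : ℝ) := by
        rw [setIntegral_const, Real.volume_real_Ioc_of_le hab, smul_eq_mul]
    _ ≤ ∫ x in Ioc a b, density v x :=
        setIntegral_mono_on (integrableOn_const measure_Ioc_lt_top.ne)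
          ((integrableOn_density v).mono_set Ioc_subset_Icc_self) measurableSet_Ioc
          fun x hx => antitone_density v hx.2

lemma circNorm_dyadicPiece_le (v : Fin n → ℝ) (k : ℤ) :
    circNorm (dyadicPiece v k) ≤ 4 * ∫ x in Ioc ((2 : ℝ) ^ (k - 2)) (2 ^ (k - 1)), density v x := by
  have h_bound : ∀ i, |dyadicPiece v k i| ≤ 2 ^ k := fun i => by
    unfold dyadicPiece
    split_ifs with h
    · rw [abs_of_pos ((zpow_pos two_pos _).trans h.1)]
      exact h.2
    · simp [zpow_nonneg]
  have h_support : #{i | dyadicPiece v k i ≠ 0} ≤ #{i | (2 : ℝ) ^ (k - 1) ≤ |v i|} := by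
    refine card_le_card fun i hi => ?_
    simp only [dyadicPiece, Finset.mem_filter, Finset.mem_univ, true_and, ne_eq, ite_eq_right_iff,
      not_forall] at hi ⊢
    exact hi.1.1.le.trans (le_abs_self _)
  have h_pow : (2 : ℝ) ^ k = 4 * (2 ^ (k - 1) - 2 ^ (k - 2)) := by
    rw [show k = k - 2 + 2 by ring, show k - 2 + 2 - 1 = k - 2 + 1 by ring, zpow_add₀ two_ne_zero,
      zpow_add_one₀ two_ne_zero, show k - 2 + 2 - 2 = k - 2 by ring]
    ring
  calc circNorm (dyadicPiece v k) ≤ 2 ^ k * √(#{i | dyadicPiece v k i ≠ 0} : ℝ) :=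
        circNorm_le_mul_sqrt_card_support (zpow_nonneg zero_le_two _) h_bound
    _ ≤ 2 ^ k * √(#{i | (2 : ℝ) ^ (k - 1) ≤ |v i|} : ℝ) := by gcongr
    _ = 4 * ((2 ^ (k - 1) - 2 ^ (k - 2)) * √(#{i | (2 : ℝ) ^ (k - 1) ≤ |v i|} : ℝ)) := by
        rw [h_pow, mul_assoc]
    _ ≤ _ := by
        gcongr
        exact mul_sqrt_card_le_setIntegral_density v
          (zpow_le_zpow_right₀ one_le_two (by omega))

lemma pairwise_disjoint_Ioc_two_zpow :
    Pairwise (Function.onFun Disjoint fun k : ℤ => Ioc ((2 : ℝ) ^ (k - 2)) (2 ^ (k - 1))) := by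
  have := (zpow_right_mono₀ (one_le_two : (1 : ℝ) ≤ 2)).comp (f := fun k : ℤ => k - 2)
    (fun _ _ h => by simpa using h) |>.pairwise_disjoint_on_Ioc_succ
  simpa [Order.succ_eq_add_one, sub_add_eq_add_sub, show ∀ k : ℤ, k + 1 - 2 = k - 1 by omega]
    using this

lemma sum_setIntegral_Ioc_two_zpow_le_circNorm (v : Fin n → ℝ) (s : Finset ℤ) :
    ∑ k ∈ s, ∫ x in Ioc ((2 : ℝ) ^ (k - 2)) (2 ^ (k - 1)), density v x ≤ circNorm v := by
  have h_sub : ∀ k : ℤ, Ioc ((2 : ℝ) ^ (k - 2)) (2 ^ (k - 1)) ⊆ Ioi 0 := fun k =>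
    Ioc_subset_Ioi_self.trans (Ioi_subset_Ioi (zpow_nonneg zero_le_two _))
  rw [← integral_biUnion_finset s (fun _ _ => measurableSet_Ioc)
    (pairwise_disjoint_Ioc_two_zpow.set_pairwise _)
    fun k _ => (integrableOn_Ioi_density v).mono_set (h_sub k)]
  exact setIntegral_mono_set (integrableOn_Ioi_density v)
    (Filter.Eventually.of_forall (density_nonneg v)) (iUnion₂_subset fun k _ => h_sub k).eventuallyLE

end CircNorm

end

open CircNorm in
theorem circNorm_dyadic_decomposition_general {n : ℕ} (v : Fin n → ℝ) :
    ∑' k : ℤ, circNorm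
        (fun i => if (2 : ℝ) ^ (k - 1) < v i ∧ v i ≤ (2 : ℝ) ^ k then v i else 0)
      ≤ 4 * circNorm v := by
  refine tsum_le_of_sum_le' (mul_nonneg zero_le_four (circNorm_nonneg v)) fun s => ?_
  calc ∑ k ∈ s, circNorm (dyadicPiece v k)
      ≤ ∑ k ∈ s, 4 * ∫ x in Ioc ((2 : ℝ) ^ (k - 2)) (2 ^ (k - 1)), density v x :=
        sum_le_sum fun k _ => circNorm_dyadicPiece_le v k
    _ ≤ 4 * circNorm v := by
        rw [← mul_sum]
        gcongr
        exact sum_setIntegral_Ioc_two_zpow_le_circNorm v s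

theorem circNorm_dyadic_decomposition {n : ℕ} (v : Fin n → ℝ)
    (hv : ∀ i, 0 ≤ v i) :
    ∑' k : ℤ, circNorm
        (fun i => if (2 : ℝ) ^ (k - 1) < v i ∧ v i ≤ (2 : ℝ) ^ k then v i else 0)
      ≤ 4 * circNorm v :=
  circNorm_dyadic_decomposition_general v
end

section
/- Let G be a simple undirected graph with m edges. For each integer i ≥ 0 let V_i be the set of vertices v of G with 2^{i−1} < deg(v) ≤ 2^i. Then Σ_{i ≥ j ≥ 0} 2^j · √(|V_i|·|V_j|) ≤ 14·m. -/
/-!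
Write `a i = 2 ^ i * |V_i|`. Every vertex of `V_i` has degree more than `2 ^ (i - 1)`, and the
classes are disjoint, so `∑ a i ≤ 2 * ∑ deg v = 4 m`. For `j ≤ i` the summand equals
`(1 / √2) ^ (i - j) * √(a i * a j) ≤ (1 / √2) ^ (i - j) * (a i + a j) / 2`, and the geometric
weights have row and column sums at most `(1 - 1 / √2)⁻¹ = 2 + √2 < 7 / 2`
(a Schur test), which gives `7 / 2 * 4 m = 14 m`.
-/

open Finset Function

theorem tsum_tsum_eq_sum_sum {α β M : Type*} [AddCommMonoid M] [TopologicalSpace M]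
    {f : α → β → M} (s : Finset α) (t : Finset β)
    (hs : ∀ i ∉ s, ∀ j, f i j = 0) (ht : ∀ i, ∀ j ∉ t, f i j = 0) :
    ∑' i, ∑' j, f i j = ∑ i ∈ s, ∑ j ∈ t, f i j := by
  rw [tsum_congr fun i => tsum_eq_sum (ht i)]
  exact tsum_eq_sum fun i hi => sum_eq_zero fun j _ => hs i hi j

theorem sum_sum_mul_sqrt_mul_le {ι : Type*} (s : Finset ι) {K : ι → ι → ℝ} {a : ι → ℝ}
    {B : ℝ} (hK : ∀ i ∈ s, ∀ j ∈ s, 0 ≤ K i j) (ha : ∀ i ∈ s, 0 ≤ a i)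
    (hrow : ∀ i ∈ s, ∑ j ∈ s, K i j ≤ B) (hcol : ∀ j ∈ s, ∑ i ∈ s, K i j ≤ B) :
    ∑ i ∈ s, ∑ j ∈ s, K i j * √(a i * a j) ≤ B * ∑ i ∈ s, a i := by
  have hrow' : ∑ i ∈ s, ∑ j ∈ s, K i j * a i ≤ B * ∑ i ∈ s, a i := by
    rw [mul_sum]
    refine sum_le_sum fun i hi => ?_
    rw [← sum_mul]
    exact mul_le_mul_of_nonneg_right (hrow i hi) (ha i hi)
  have hcol' : ∑ i ∈ s, ∑ j ∈ s, K i j * a j ≤ B * ∑ i ∈ s, a i := by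
    rw [sum_comm, mul_sum]
    refine sum_le_sum fun j hj => ?_
    rw [← sum_mul]
    exact mul_le_mul_of_nonneg_right (hcol j hj) (ha j hj)
  calc ∑ i ∈ s, ∑ j ∈ s, K i j * √(a i * a j)
      ≤ ∑ i ∈ s, ∑ j ∈ s, (K i j * a i + K i j * a j) / 2 := by
        refine sum_le_sum fun i hi => sum_le_sum fun j hj => ?_
        have amgm : √(a i * a j) ≤ (a i + a j) / 2 :=
          Real.sqrt_le_iff.mpr
            ⟨by linarith [ha i hi, ha j hj], by nlinarith [sq_nonneg (a i - a j)]⟩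
        rw [← mul_add, mul_div_assoc]
        exact mul_le_mul_of_nonneg_left amgm (hK i hi j hj)
    _ ≤ B * ∑ i ∈ s, a i := by
        simp only [← sum_div, sum_add_distrib]
        linarith

theorem sum_pow_le_inv_one_sub_of_injOn {ι : Type*} {c : ℝ} (hc₀ : 0 ≤ c) (hc₁ : c < 1)
    (s : Finset ι) {f : ι → ℕ} (hf : Set.InjOn f s) :
    ∑ x ∈ s, c ^ f x ≤ (1 - c)⁻¹ := by
  classical
  rw [← sum_image hf, ← tsum_geometric_of_lt_one hc₀ hc₁]
  exact (summable_geometric_of_lt_one hc₀ hc₁).sum_le_tsum _ fun k _ => pow_nonneg hc₀ k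

noncomputable def geomKernel (c : ℝ) (i j : ℕ) : ℝ :=
  if j ≤ i then c ^ (i - j) else 0

section geomKernel

variable {c : ℝ}

theorem geomKernel_nonneg (hc : 0 ≤ c) (i j : ℕ) : 0 ≤ geomKernel c i j := by
  unfold geomKernel
  split_ifs <;> positivity

theorem sum_geomKernel_right_le (hc₀ : 0 ≤ c) (hc₁ : c < 1) (s : Finset ℕ) (i : ℕ) :
    ∑ j ∈ s, geomKernel c i j ≤ (1 - c)⁻¹ := by
  unfold geomKernel
  rw [← sum_filter]
  exact sum_pow_le_inv_one_sub_of_injOn hc₀ hc₁ _ fun j hj k hk h => by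
    simp only [coe_filter, Set.mem_ofPred_eq] at hj hk
    omega

theorem sum_geomKernel_left_le (hc₀ : 0 ≤ c) (hc₁ : c < 1) (s : Finset ℕ) (j : ℕ) :
    ∑ i ∈ s, geomKernel c i j ≤ (1 - c)⁻¹ := by
  unfold geomKernel
  rw [← sum_filter]
  exact sum_pow_le_inv_one_sub_of_injOn hc₀ hc₁ _ fun i hi k hk h => by
    simp only [coe_filter, Set.mem_ofPred_eq] at hi hk
    omega

end geomKernel

theorem inv_one_sub_inv_sqrt_two_le : (1 - (√2)⁻¹)⁻¹ ≤ (7 / 2 : ℝ) := by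
  have h : (7 / 5 : ℝ) ≤ √2 := Real.le_sqrt_of_sq_le (by norm_num)
  have hc : (√2)⁻¹ ≤ (5 / 7 : ℝ) := by
    rw [inv_le_comm₀ (by positivity) (by norm_num)]
    linarith
  rw [inv_le_comm₀ (by linarith) (by norm_num)]
  linarith

theorem two_pow_mul_sqrt_mul_eq {i j : ℕ} (hji : j ≤ i) (x y : ℝ) :
    2 ^ j * √(x * y) = (√2)⁻¹ ^ (i - j) * √(2 ^ i * x * (2 ^ j * y)) := by
  obtain ⟨k, rfl⟩ := Nat.exists_eq_add_of_le hji
  have hs : √2 ^ 2 = 2 := Real.sq_sqrt zero_le_two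
  have h2 : (2 : ℝ) ^ (j + k) * x * (2 ^ j * y) = (√2 ^ k * 2 ^ j) ^ 2 * (x * y) := by
    rw [mul_pow, ← pow_mul, mul_comm k, pow_mul, hs]
    ring
  rw [Nat.add_sub_cancel_left, h2, Real.sqrt_mul (sq_nonneg _), Real.sqrt_sq (by positivity),
    ← mul_assoc, ← mul_assoc, ← mul_pow, inv_mul_cancel₀ (by positivity), one_pow, one_mul]

namespace SimpleGraph

variable {V : Type*} [Fintype V] (G : SimpleGraph V) [DecidableRel G.Adj]

noncomputable def dyadicClass (i : ℕ) : Finset V :=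
  univ.filter fun v => (2 : ℝ) ^ ((i : ℤ) - 1) < G.degree v ∧ (G.degree v : ℝ) ≤ 2 ^ i

variable {G}

theorem two_pow_lt_two_mul_degree {i : ℕ} {v : V} (hv : v ∈ G.dyadicClass i) :
    (2 : ℝ) ^ i < 2 * G.degree v := by
  have hlt := (mem_filter.mp hv).2.1
  rw [zpow_sub₀ two_ne_zero, zpow_one, zpow_natCast] at hlt
  linarith

theorem le_card_of_mem_dyadicClass {i : ℕ} {v : V} (hv : v ∈ G.dyadicClass i) :
    i ≤ Fintype.card V := by
  have hdeg : G.degree v < Fintype.card V := G.degree_lt_card_verts v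
  have hcard : Fintype.card V < 2 ^ Fintype.card V := Nat.lt_two_pow_self
  have hpow : (2 : ℝ) ^ i < 2 ^ (Fintype.card V + 1) := by
    calc (2 : ℝ) ^ i < 2 * G.degree v := two_pow_lt_two_mul_degree hv
      _ ≤ 2 * 2 ^ Fintype.card V := by gcongr; exact_mod_cast (hdeg.trans hcard).le
      _ = 2 ^ (Fintype.card V + 1) := by ring
  exact Nat.le_of_lt_succ ((pow_lt_pow_iff_right₀ one_lt_two).mp hpow)

theorem pairwise_disjoint_dyadicClass : Pairwise (Disjoint on G.dyadicClass) := by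
  suffices ∀ i j, i < j → Disjoint (G.dyadicClass i) (G.dyadicClass j) from
    fun i j hij => hij.lt_or_gt.elim (this i j) fun h => (this j i h).symm
  intro i j hij
  refine Finset.disjoint_left.mpr fun v hvi hvj => ?_
  have hle := (mem_filter.mp hvi).2.2
  have hlt := (mem_filter.mp hvj).2.1
  have : (2 : ℝ) ^ i ≤ 2 ^ ((j : ℤ) - 1) := by
    rw [← zpow_natCast]
    exact zpow_le_zpow_right₀ one_le_two (by omega)
  linarith

variable [DecidableEq V]

theorem sum_two_pow_mul_card_dyadicClass_le (s : Finset ℕ) :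
    ∑ i ∈ s, (2 : ℝ) ^ i * #(G.dyadicClass i) ≤ 4 * #G.edgeFinset := by
  have hdisj : (s : Set ℕ).PairwiseDisjoint G.dyadicClass :=
    pairwise_disjoint_dyadicClass.set_pairwise _
  have hdeg : ∑ v, (G.degree v : ℝ) = 2 * #G.edgeFinset := by
    exact_mod_cast G.sum_degrees_eq_twice_card_edges
  calc ∑ i ∈ s, (2 : ℝ) ^ i * #(G.dyadicClass i)
      = ∑ i ∈ s, ∑ v ∈ G.dyadicClass i, (2 : ℝ) ^ i := by simp [mul_comm]
    _ ≤ ∑ i ∈ s, ∑ v ∈ G.dyadicClass i, 2 * (G.degree v : ℝ) :=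
        sum_le_sum fun i _ => sum_le_sum fun v hv => (two_pow_lt_two_mul_degree hv).le
    _ = 2 * ∑ v ∈ s.biUnion G.dyadicClass, (G.degree v : ℝ) := by
        rw [sum_biUnion hdisj, mul_sum]
        simp only [mul_sum]
    _ ≤ 2 * ∑ v, (G.degree v : ℝ) := by
        gcongr
        exact subset_univ _
    _ = 4 * #G.edgeFinset := by rw [hdeg]; ring

end SimpleGraph

open SimpleGraph in
theorem dyadic_degree_sum_bound {V : Type*} [Fintype V] [DecidableEq V]
    (G : SimpleGraph V) [DecidableRel G.Adj] :
    ∑' i : ℕ, ∑' j : ℕ,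
        (if j ≤ i then
          (2 : ℝ) ^ j *
            Real.sqrt
              (((Finset.univ.filter (fun v : V =>
                  (2 : ℝ) ^ ((i : ℤ) - 1) < (G.degree v : ℝ) ∧
                    (G.degree v : ℝ) ≤ (2 : ℝ) ^ (i : ℕ))).card : ℝ) *
               ((Finset.univ.filter (fun v : V =>
                  (2 : ℝ) ^ ((j : ℤ) - 1) < (G.degree v : ℝ) ∧
                    (G.degree v : ℝ) ≤ (2 : ℝ) ^ (j : ℕ))).card : ℝ))
        else 0)
      ≤ 14 * (G.edgeFinset.card : ℝ) := by
  let a (i : ℕ) : ℝ := 2 ^ i * #(G.dyadicClass i)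
  let s := range (Fintype.card V + 1)
  have ha : ∀ i ∉ s, a i = 0 := fun i hi => by
    suffices G.dyadicClass i = ∅ by simp [a, this]
    exact eq_empty_of_forall_notMem fun v hv =>
      hi (mem_range.mpr (Nat.lt_succ_of_le (le_card_of_mem_dyadicClass hv)))
  have hc₀ : 0 ≤ (√2)⁻¹ := by positivity
  have hc₁ : (√2)⁻¹ < 1 := inv_lt_one_of_one_lt₀ Real.one_lt_sqrt_two
  calc _ = ∑' i, ∑' j, geomKernel (√2)⁻¹ i j * √(a i * a j) := by
        refine tsum_congr fun i => tsum_congr fun j => ?_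
        unfold geomKernel
        split_ifs with hji
        · exact two_pow_mul_sqrt_mul_eq hji _ _
        · rw [zero_mul]
    _ = ∑ i ∈ s, ∑ j ∈ s, geomKernel (√2)⁻¹ i j * √(a i * a j) :=
        tsum_tsum_eq_sum_sum s s (fun i hi j => by simp [ha i hi])
          (fun i j hj => by simp [ha j hj])
    _ ≤ (1 - (√2)⁻¹)⁻¹ * ∑ i ∈ s, a i :=
        sum_sum_mul_sqrt_mul_le s (fun i _ j _ => geomKernel_nonneg hc₀ i j)
          (fun i _ => by positivity)
          (fun i _ => sum_geomKernel_right_le hc₀ hc₁ s i)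
          (fun j _ => sum_geomKernel_left_le hc₀ hc₁ s j)
    _ ≤ 7 / 2 * (4 * #G.edgeFinset) :=
        mul_le_mul inv_one_sub_inv_sqrt_two_le (sum_two_pow_mul_card_dyadicClass_le s)
          (sum_nonneg fun i _ => by positivity) (by norm_num)
    _ = 14 * #G.edgeFinset := by ring
end

section
/- Let G be a simple undirected graph on n vertices with adjacency matrix X_G, and let A be a subset of the vertices of G. For each integer i ≥ 0 let B_i be the set of vertices v of G whose number of neighbours in A lies in (2^{i−1}, 2^i]. Then ‖X_G · 𝟙_A‖_◦ ≤ 2 · Σ_{i ≥ 0} 2^i · √|B_i|, where 𝟙_A ∈ ℝ^n is the indicator vector of A. -/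
open MeasureTheory

/-!
Write `d v` for the number of neighbours of `v` in `A`, so that `X_G 𝟙_A = d`. A vertex with
`d v > 0` lies in the dyadic shell `B k` for `k = ⌈log₂ (d v)⌉`, and there `d v ≤ 2 ^ k`. So for
`x > 0` the level set `{d ≥ x}` is covered by the shells `B k` with `x ≤ 2 ^ k`, and
subadditivity of `√` bounds the integrand at `x` by `∑_{x ≤ 2 ^ k} √|B k|`.
Integrating over `x ∈ (0, ∞)`, the shell `B k` contributes `2 ^ k * √|B k|`.
-/

open Finset

theorem Real.sqrt_add_le_add_sqrt (x y : ℝ) : √(x + y) ≤ √x + √y := by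
  rw [Real.sqrt_le_iff]
  refine ⟨by positivity, ?_⟩
  have hx : x ≤ √x ^ 2 := by rw [Real.sq_sqrt']; exact le_max_left _ _
  have hy : y ≤ √y ^ 2 := by rw [Real.sq_sqrt']; exact le_max_left _ _
  nlinarith [Real.sqrt_nonneg x, Real.sqrt_nonneg y]

theorem Real.sqrt_sum_le_sum_sqrt {ι : Type*} (s : Finset ι) (f : ι → ℝ) :
    √(∑ i ∈ s, f i) ≤ ∑ i ∈ s, √(f i) :=
  le_sum_of_subadditive _ Real.sqrt_zero.le Real.sqrt_add_le_add_sqrt s f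

theorem integrableOn_Ioi_indicator_Ioc_const (a b : ℝ) :
    IntegrableOn ((Set.Ioc 0 a).indicator fun _ => b) (Set.Ioi 0) := by
  rw [IntegrableOn, integrable_indicator_iff measurableSet_Ioc]
  exact integrableOn_const (measure_Ioc_lt_top.trans_le' (Measure.restrict_apply_le _ _)).ne

theorem integral_Ioi_indicator_Ioc_const {a : ℝ} (ha : 0 ≤ a) (b : ℝ) :
    ∫ x in Set.Ioi 0, (Set.Ioc 0 a).indicator (fun _ => b) x = a * b := by
  rw [setIntegral_indicator measurableSet_Ioc,
    Set.inter_eq_self_of_subset_right Set.Ioc_subset_Ioi_self, setIntegral_const,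
    Real.volume_real_Ioc, smul_eq_mul, sub_zero, max_eq_left ha]

section LevelSetCover

variable {n : ℕ} {ι : Type*} (v : Fin n → ℝ) (s : Finset ι) (B : ι → Finset (Fin n)) (c : ι → ℝ)

theorem sqrt_card_superlevel_le_sum_indicator
    (hcover : ∀ i, v i ≠ 0 → ∃ k ∈ s, i ∈ B k ∧ |v i| ≤ c k) {x : ℝ} (hx : 0 < x) :
    √(#{i | x ≤ |v i|} : ℝ) ≤
      ∑ k ∈ s, (Set.Ioc 0 (c k)).indicator (fun _ => √(#(B k) : ℝ)) x := by
  have hsub : ({i | x ≤ |v i|} : Finset (Fin n)) ⊆ {k ∈ s | x ≤ c k}.biUnion B := by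
    intro i hi
    have hvi : x ≤ |v i| := (mem_filter.mp hi).2
    obtain ⟨k, hks, hiB, hle⟩ := hcover i (abs_pos.mp (hx.trans_le hvi))
    exact mem_biUnion.mpr ⟨k, mem_filter.mpr ⟨hks, hvi.trans hle⟩, hiB⟩
  have hcard : (#{i | x ≤ |v i|} : ℝ) ≤ ∑ k ∈ s with x ≤ c k, (#(B k) : ℝ) := by
    exact_mod_cast (card_le_card hsub).trans card_biUnion_le
  calc √(#{i | x ≤ |v i|} : ℝ)
      ≤ √(∑ k ∈ s with x ≤ c k, (#(B k) : ℝ)) := Real.sqrt_le_sqrt hcard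
    _ ≤ ∑ k ∈ s with x ≤ c k, √(#(B k) : ℝ) := Real.sqrt_sum_le_sum_sqrt _ _
    _ = _ := by
      rw [sum_filter]
      simp only [Set.indicator_apply, Set.mem_Ioc, hx, true_and]

theorem circNorm_le_sum_mul_sqrt_card (hc : ∀ k ∈ s, 0 ≤ c k)
    (hcover : ∀ i, v i ≠ 0 → ∃ k ∈ s, i ∈ B k ∧ |v i| ≤ c k) :
    circNorm v ≤ ∑ k ∈ s, c k * √(#(B k) : ℝ) := by
  have hint : ∀ k ∈ s,
      IntegrableOn ((Set.Ioc 0 (c k)).indicator fun _ => √(#(B k) : ℝ)) (Set.Ioi 0) :=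
    fun k _ => integrableOn_Ioi_indicator_Ioc_const _ _
  calc circNorm v
      ≤ ∫ x in Set.Ioi 0, ∑ k ∈ s, (Set.Ioc 0 (c k)).indicator (fun _ => √(#(B k) : ℝ)) x := by
        refine integral_mono_of_nonneg (.of_forall fun x => Real.sqrt_nonneg _)
          (integrable_finsetSum _ hint) (ae_restrict_of_forall_mem measurableSet_Ioi ?_)
        exact fun x hx => sqrt_card_superlevel_le_sum_indicator v s B c hcover hx
    _ = ∑ k ∈ s, c k * √(#(B k) : ℝ) := by
        rw [integral_finsetSum _ hint]
        exact sum_congr rfl fun k hk => integral_Ioi_indicator_Ioc_const (hc k hk) _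

end LevelSetCover

theorem SimpleGraph.adjMatrix_mulVec_indicator_apply {V R : Type*} [Fintype V] [DecidableEq V]
    [NonAssocSemiring R] (G : SimpleGraph V) [DecidableRel G.Adj] (A : Finset V) (v : V) :
    (G.adjMatrix R).mulVec (fun i => if i ∈ A then 1 else 0) v = #{a ∈ A | G.Adj v a} := by
  rw [adjMatrix_mulVec_apply, sum_boole, filter_mem_eq_inter, inter_comm, ← filter_mem_eq_inter]
  simp only [mem_neighborFinset]

theorem two_zpow_sub_one_lt_and_le_two_pow_iff {d k : ℕ} :
    (2 : ℝ) ^ ((k : ℤ) - 1) < d ∧ (d : ℝ) ≤ 2 ^ k ↔ 0 < d ∧ Nat.clog 2 d = k := by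
  rcases k with _ | j
  · have half_lt_iff : (1 / 2 : ℝ) < d ↔ 0 < d := by
      refine ⟨fun h => ?_, fun h => ?_⟩
      · exact_mod_cast (by linarith : (0 : ℝ) < d)
      · linarith [(Nat.one_le_cast (α := ℝ)).mpr h]
    rw [← Nat.le_zero, Nat.clog_le_iff_le_pow one_lt_two]
    norm_num [half_lt_iff]
  · have : ((j + 1 : ℕ) : ℤ) - 1 = j := by push_cast; ring
    rw [this, zpow_natCast, le_antisymm_iff, Nat.clog_le_iff_le_pow one_lt_two, Nat.succ_le_iff,
      Nat.lt_clog_iff_pow_lt one_lt_two]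
    norm_cast
    exact ⟨fun ⟨h1, h2⟩ => ⟨(Nat.zero_le _).trans_lt h1, h2, h1⟩, fun ⟨_, h2, h1⟩ => ⟨h1, h2⟩⟩

theorem circNorm_adjMatrix_indicator_bound {n : ℕ} (G : SimpleGraph (Fin n))
    [DecidableRel G.Adj] (A : Finset (Fin n)) :
    circNorm ((G.adjMatrix ℝ).mulVec (fun i => if i ∈ A then (1 : ℝ) else 0)) ≤
      2 * ∑' i : ℕ,
        (2 : ℝ) ^ (i : ℕ) *
          Real.sqrt ((Finset.univ.filter (fun v : Fin n =>
            (2 : ℝ) ^ ((i : ℤ) - 1) < ((A.filter (fun a => G.Adj v a)).card : ℝ) ∧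
              ((A.filter (fun a => G.Adj v a)).card : ℝ) ≤ (2 : ℝ) ^ (i : ℕ))).card : ℝ) := by
  set d : Fin n → ℕ := fun v => #{a ∈ A | G.Adj v a}
  set B : ℕ → Finset (Fin n) := fun k => {v | (2 : ℝ) ^ ((k : ℤ) - 1) < d v ∧ (d v : ℝ) ≤ 2 ^ k}
  have mem_B : ∀ k v, v ∈ B k ↔ 0 < d v ∧ Nat.clog 2 (d v) = k := fun k v => by
    simp only [B, mem_filter, mem_univ, true_and, two_zpow_sub_one_lt_and_le_two_pow_iff]
  set s := univ.image fun v => Nat.clog 2 (d v)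
  have summand_eq_zero : ∀ k ∉ s, (2 : ℝ) ^ k * √(#(B k) : ℝ) = 0 := fun k hk => by
    rw [card_eq_zero.mpr (eq_empty_of_forall_notMem fun v hv =>
      hk (mem_image.mpr ⟨v, mem_univ v, ((mem_B k v).mp hv).2⟩))]
    simp
  have hcover : ∀ v, (d v : ℝ) ≠ 0 → ∃ k ∈ s, v ∈ B k ∧ |(d v : ℝ)| ≤ 2 ^ k := fun v hv =>
    ⟨_, mem_image_of_mem _ (mem_univ v),
      (mem_B _ v).mpr ⟨Nat.pos_of_ne_zero (by exact_mod_cast hv), rfl⟩,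
      by exact_mod_cast Nat.le_pow_clog one_lt_two (d v)⟩
  have hmulVec :
      (G.adjMatrix ℝ).mulVec (fun i => if i ∈ A then (1 : ℝ) else 0) = fun v => (d v : ℝ) :=
    funext (G.adjMatrix_mulVec_indicator_apply A)
  rw [hmulVec, tsum_eq_sum summand_eq_zero]
  calc circNorm (fun v => (d v : ℝ))
      ≤ ∑ k ∈ s, (2 : ℝ) ^ k * √(#(B k) : ℝ) :=
        circNorm_le_sum_mul_sqrt_card _ s B _ (fun _ _ => by positivity) hcover
    _ ≤ 2 * ∑ k ∈ s, (2 : ℝ) ^ k * √(#(B k) : ℝ) :=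
        le_mul_of_one_le_left (sum_nonneg fun _ _ => by positivity) one_le_two
end
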